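/- arXiv:2010.10220 — 4 statements merged into one kernel-verified Lean document; each statement's English description precedes it below -/
import Mathlib

section
/- Main Theorem (counterexample to 2-jet determination in codimension 5). The holomorphic vector field T = −(1/2)w₁²·Y + (1/2)w₂²·Y + w₁w₂·X − 2w₂w₅·Z − 2w₂w₄·U + 2w₄w₅·Y lies in hol(M,0). Concretely: for all (z,w) ∈ ℂ⁴ × ℂ⁵ satisfying Im w_k = P_k(z) for k = 1,…,5, setting a₃ = (−(1/2)w₁² + (1/2)w₂² + 2w₄w₅ + i·w₁w₂)·z₁ − 2i·w₂w₄·z₂ and a₄ = ((1/2)w₁² − (1/2)w₂² − 2w₄w₅ + i·w₁w₂)·z₂ − 2i·w₂w₅·z₁ (the ∂/∂z₃ and ∂/∂z₄ coefficients of T), one has Re(a₃·conj(z₂) + a₄·conj(z₁)) = 0. -/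
open Complex ComplexConjugate

/-- Main Theorem (counterexample to 2-jet determination in codimension 5): the vector field
`T = -½w₁²Y + ½w₂²Y + w₁w₂X - 2w₂w₅Z - 2w₂w₄U + 2w₄w₅Y` lies in `hol(M,0)`: at every point
of the quadric `M ⊂ ℂ⁹`, its `∂/∂z₃`- and `∂/∂z₄`-coefficients `a₃, a₄` satisfy the tangency
identity `Re(a₃ conj z₂ + a₄ conj z₁) = 0`. -/
theorem T_in_hol_M (z₁ z₂ z₃ z₄ w₁ w₂ w₃ w₄ w₅ : ℂ)
    (h1 : (w₁.im : ℂ) = z₁ * conj z₂ + z₂ * conj z₁)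
    (h2 : (w₂.im : ℂ) = -I * (z₁ * conj z₂) + I * (z₂ * conj z₁))
    (h3 : (w₃.im : ℂ) = z₃ * conj z₂ + z₄ * conj z₁ + z₂ * conj z₃ + z₁ * conj z₄)
    (h4 : (w₄.im : ℂ) = z₁ * conj z₁)
    (h5 : (w₅.im : ℂ) = z₂ * conj z₂) :
    (((-(1/2) * w₁ ^ 2 + (1/2) * w₂ ^ 2 + 2 * w₄ * w₅ + I * w₁ * w₂) * z₁
        - 2 * I * w₂ * w₄ * z₂) * conj z₂
      + (((1/2) * w₁ ^ 2 - (1/2) * w₂ ^ 2 - 2 * w₄ * w₅ + I * w₁ * w₂) * z₂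
        - 2 * I * w₂ * w₅ * z₁) * conj z₁).re = 0 := by
  have e1 := congrArg Complex.re h1
  have e2 := congrArg Complex.re h2
  have e4 := congrArg Complex.re h4
  have e5 := congrArg Complex.re h5
  simp only [Complex.ofReal_re, Complex.add_re, Complex.mul_re, Complex.mul_im,
    Complex.neg_re, Complex.neg_im, Complex.I_re, Complex.I_im,
    Complex.conj_re, Complex.conj_im] at e1 e2 e4 e5
  simp only [pow_two, Complex.add_re, Complex.sub_re, Complex.mul_re, Complex.mul_im,
    Complex.add_im, Complex.sub_im, Complex.neg_re, Complex.neg_im,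
    Complex.I_re, Complex.I_im, Complex.conj_re, Complex.conj_im,
    Complex.re_ofNat, Complex.im_ofNat, Complex.div_re, Complex.div_im,
    Complex.one_re, Complex.one_im, Complex.normSq_apply]
  rw [e1, e2, e4, e5]
  ring
end

section
/- The four Hermitian forms on ℂ⁶ = ℂ³_z × ℂ³_{z'} given by H₁(z,z') = −i z₁·conj(z₂) + i z₂·conj(z₁), H₂(z,z') = −i z₂·conj(z₃) + i z₃·conj(z₂), H₃(z,z') = −i z₁·conj(z₃) + i z₃·conj(z₁), and H₄(z,z') = Σ_{j=1}^{3} ( z_j·conj(z'_j) + z'_j·conj(z_j) ) are linearly independent over ℝ, and their 6×6 Hermitian matrices have trivial common kernel: if v ∈ ℂ⁶ is annihilated by the matrix of each H_i, i = 1,…,4, then v = 0. Consequently the quadric in ℂ¹⁰ defined by Im w_i = H_i (i = 1,2,3) and Im w'₁ = H₄ is a generic (non-degenerate) quadric model of codimension 4. -/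
/-!
Each of `B1, B2, B3, B4` is the only one of the four matrices with a nonzero entry in position
`(0,1)`, `(1,2)`, `(0,2)`, `(0,3)` respectively, so reading off these entries of a vanishing real
combination kills its coefficients one by one. The common kernel is trivial already for `B4`
alone: it swaps `z` and `z'`, so it is an involution.
-/

open Matrix Complex

/-- Matrix of `H₁ = -i z₁ conj z₂ + i z₂ conj z₁` on `ℂ⁶ = ℂ³_z × ℂ³_{z'}`. -/
noncomputable def B1 : Matrix (Fin 6) (Fin 6) ℂ :=
  !![0,-I,0,0,0,0; I,0,0,0,0,0; 0,0,0,0,0,0; 0,0,0,0,0,0; 0,0,0,0,0,0; 0,0,0,0,0,0]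

/-- Matrix of `H₂ = -i z₂ conj z₃ + i z₃ conj z₂`. -/
noncomputable def B2 : Matrix (Fin 6) (Fin 6) ℂ :=
  !![0,0,0,0,0,0; 0,0,-I,0,0,0; 0,I,0,0,0,0; 0,0,0,0,0,0; 0,0,0,0,0,0; 0,0,0,0,0,0]

/-- Matrix of `H₃ = -i z₁ conj z₃ + i z₃ conj z₁`. -/
noncomputable def B3 : Matrix (Fin 6) (Fin 6) ℂ :=
  !![0,0,-I,0,0,0; 0,0,0,0,0,0; I,0,0,0,0,0; 0,0,0,0,0,0; 0,0,0,0,0,0; 0,0,0,0,0,0]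

/-- Matrix of `H₄ = Σ_j (z_j conj z'_j + z'_j conj z_j)`, i.e. `[[0, I₃],[I₃, 0]]`. -/
noncomputable def B4 : Matrix (Fin 6) (Fin 6) ℂ :=
  !![0,0,0,1,0,0; 0,0,0,0,1,0; 0,0,0,0,0,1; 1,0,0,0,0,0; 0,1,0,0,0,0; 0,0,1,0,0,0]

noncomputable def hermitianCombination (c : Fin 4 → ℝ) : Matrix (Fin 6) (Fin 6) ℂ :=
  c 0 • B1 + c 1 • B2 + c 2 • B3 + c 3 • B4

lemma hermitianCombination_apply_zero_one (c : Fin 4 → ℝ) :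
    hermitianCombination c 0 1 = -(c 0 * I) := by
  simp [hermitianCombination, B1, B2, B3, B4]

lemma hermitianCombination_apply_one_two (c : Fin 4 → ℝ) :
    hermitianCombination c 1 2 = -(c 1 * I) := by
  simp [hermitianCombination, B1, B2, B3, B4]

lemma hermitianCombination_apply_zero_two (c : Fin 4 → ℝ) :
    hermitianCombination c 0 2 = -(c 2 * I) := by
  simp [hermitianCombination, B1, B2, B3, B4]

lemma hermitianCombination_apply_zero_three (c : Fin 4 → ℝ) :
    hermitianCombination c 0 3 = c 3 := by
  simp [hermitianCombination, B1, B2, B3, B4]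

lemma eq_zero_of_hermitianCombination_eq_zero {c : Fin 4 → ℝ}
    (h : hermitianCombination c = 0) : c = 0 := by
  ext k
  fin_cases k
  · simpa [h] using (hermitianCombination_apply_zero_one c).symm
  · simpa [h] using (hermitianCombination_apply_one_two c).symm
  · simpa [h] using (hermitianCombination_apply_zero_two c).symm
  · simpa [h] using (hermitianCombination_apply_zero_three c).symm

lemma B4_mul_self : B4 * B4 = 1 := by
  ext i j
  fin_cases i <;> fin_cases j <;> simp [B4, mul_apply, Fin.sum_univ_succ, one_apply]

lemma eq_zero_of_B4_mulVec_eq_zero {v : Fin 6 → ℂ} (h : B4 *ᵥ v = 0) : v = 0 := by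
  rw [← one_mulVec v, ← B4_mul_self, ← mulVec_mulVec, h, mulVec_zero]

/-- The four Hermitian forms `H₁, …, H₄` on `ℂ⁶` are linearly independent over `ℝ` and their
matrices have trivial common kernel: the codimension-4 quadric in `ℂ¹⁰` defined by
`Im wᵢ = Hᵢ` (`i = 1,2,3`) and `Im w'₁ = H₄` is a generic (non-degenerate) quadric model. -/
theorem codim4_model_nondegenerate :
    (∀ c : Fin 4 → ℝ, c 0 • B1 + c 1 • B2 + c 2 • B3 + c 3 • B4 = 0 → c = 0) ∧
    (∀ v : Fin 6 → ℂ,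
      B1 *ᵥ v = 0 → B2 *ᵥ v = 0 → B3 *ᵥ v = 0 → B4 *ᵥ v = 0 → v = 0) :=
  ⟨fun _ h => eq_zero_of_hermitianCombination_eq_zero h,
    fun _ _ _ _ h => eq_zero_of_B4_mulVec_eq_zero h⟩
end

section
/- Let M̃ ⊂ ℂ⁹ (coordinates (z₁,z₂,z'₁,z'₂,w₁,w₂,w₃,w₄,w'₁)) be defined by Im w₁ = z₁·conj(z₂) + z₂·conj(z₁), Im w₂ = −i z₁·conj(z₂) + i z₂·conj(z₁), Im w₃ = z₁·conj(z₁), Im w₄ = z₂·conj(z₂), and Im w'₁ = z₁·conj(z'₂) + z'₂·conj(z₁) + z₂·conj(z'₁) + z'₁·conj(z₂). Define b' = −3w₁⁴ − 6w₁²w₂² + 24w₁²w₃w₄ − 3w₂⁴ + 24w₂²w₃w₄ − 48w₃²w₄² + 2w₁(2w₁³ + 2w₁w₂² − 8w₁w₃w₄) + 2w₂(2w₁²w₂ + 2w₂³ − 8w₂w₃w₄) + 2w₄(−4w₁²w₃ − 4w₂²w₃ + 16w₃²w₄) + 2w₃(−4w₁²w₄ − 4w₂²w₄ + 16w₃w₄²),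 a'₁ = (2w₁³ + 2w₁w₂² − 8w₁w₃w₄)·z₁ − i(2w₁²w₂ + 2w₂³ − 8w₂w₃w₄)·z₁ + (−4w₁²w₃ − 4w₂²w₃ + 16w₃²w₄)·z₂, and a'₂ = (2w₁³ + 2w₁w₂² − 8w₁w₃w₄)·z₂ + i(2w₁²w₂ + 2w₂³ − 8w₂w₃w₄)·z₂ + (−4w₁²w₄ − 4w₂²w₄ + 16w₃w₄²)·z₁. Then for all z₁, z₂ ∈ ℂ and w₁, w₂, w₃, w₄ ∈ ℂ satisfying the first four defining equations, one has (1/2)·Im(b') = Re( a'₁·conj(z₂) + a'₂·conj(z₁) ). Hence the holomorphic vector field W = b' ∂/∂w'₁ + a'₁ ∂/∂z'₁ + a'₂ ∂/∂z'₂ is an infinitesimal CR automorphism of M̃, i.e. W ∈ hol(M̃,0). -/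
set_option maxHeartbeats 1000000


open Complex ComplexConjugate

/-- The `∂/∂w'₁`-coefficient of the vector field `W`. -/
noncomputable def bW (w₁ w₂ w₃ w₄ : ℂ) : ℂ :=
  -3 * w₁ ^ 4 - 6 * w₁ ^ 2 * w₂ ^ 2 + 24 * w₁ ^ 2 * w₃ * w₄ - 3 * w₂ ^ 4
    + 24 * w₂ ^ 2 * w₃ * w₄ - 48 * w₃ ^ 2 * w₄ ^ 2
    + 2 * w₁ * (2 * w₁ ^ 3 + 2 * w₁ * w₂ ^ 2 - 8 * w₁ * w₃ * w₄)
    + 2 * w₂ * (2 * w₁ ^ 2 * w₂ + 2 * w₂ ^ 3 - 8 * w₂ * w₃ * w₄)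
    + 2 * w₄ * (-4 * w₁ ^ 2 * w₃ - 4 * w₂ ^ 2 * w₃ + 16 * w₃ ^ 2 * w₄)
    + 2 * w₃ * (-4 * w₁ ^ 2 * w₄ - 4 * w₂ ^ 2 * w₄ + 16 * w₃ * w₄ ^ 2)

/-- The `∂/∂z'₁`-coefficient of the vector field `W`. -/
noncomputable def aW1 (z₁ z₂ w₁ w₂ w₃ w₄ : ℂ) : ℂ :=
  (2 * w₁ ^ 3 + 2 * w₁ * w₂ ^ 2 - 8 * w₁ * w₃ * w₄) * z₁
    - I * (2 * w₁ ^ 2 * w₂ + 2 * w₂ ^ 3 - 8 * w₂ * w₃ * w₄) * z₁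
    + (-4 * w₁ ^ 2 * w₃ - 4 * w₂ ^ 2 * w₃ + 16 * w₃ ^ 2 * w₄) * z₂

/-- The `∂/∂z'₂`-coefficient of the vector field `W`. -/
noncomputable def aW2 (z₁ z₂ w₁ w₂ w₃ w₄ : ℂ) : ℂ :=
  (2 * w₁ ^ 3 + 2 * w₁ * w₂ ^ 2 - 8 * w₁ * w₃ * w₄) * z₂
    + I * (2 * w₁ ^ 2 * w₂ + 2 * w₂ ^ 3 - 8 * w₂ * w₃ * w₄) * z₂
    + (-4 * w₁ ^ 2 * w₄ - 4 * w₂ ^ 2 * w₄ + 16 * w₃ * w₄ ^ 2) * z₁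

/-- The holomorphic vector field `W = b' ∂_{w'₁} + a'₁ ∂_{z'₁} + a'₂ ∂_{z'₂}` is an
infinitesimal CR automorphism of the codimension-5 quadric `M̃ ⊂ ℂ⁹`: at every point of `M̃`
the tangency identity `½ Im b' = Re(a'₁ conj z₂ + a'₂ conj z₁)` holds. -/
theorem W_in_hol_M (z₁ z₂ w₁ w₂ w₃ w₄ : ℂ)
    (h1 : (w₁.im : ℂ) = z₁ * conj z₂ + z₂ * conj z₁)
    (h2 : (w₂.im : ℂ) = -I * (z₁ * conj z₂) + I * (z₂ * conj z₁))
    (h3 : (w₃.im : ℂ) = z₁ * conj z₁)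
    (h4 : (w₄.im : ℂ) = z₂ * conj z₂) :
    (1 / 2 : ℝ) * (bW w₁ w₂ w₃ w₄).im
      = (aW1 z₁ z₂ w₁ w₂ w₃ w₄ * conj z₂ + aW2 z₁ z₂ w₁ w₂ w₃ w₄ * conj z₁).re := by
  have sb := Complex.sub_conj (bW w₁ w₂ w₃ w₄)
  have sa := Complex.add_conj (aW1 z₁ z₂ w₁ w₂ w₃ w₄ * conj z₂ + aW2 z₁ z₂ w₁ w₂ w₃ w₄ * conj z₁)
  push_cast at sb sa
  have e1 := Complex.sub_conj w₁
  have e2 := Complex.sub_conj w₂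
  have e3 := Complex.sub_conj w₃
  have e4 := Complex.sub_conj w₄
  push_cast at e1 e2 e3 e4
  have c1 : conj w₁ = w₁ - 2 * (z₁ * conj z₂ + z₂ * conj z₁) * I := by
    linear_combination -e1 - 2 * I * h1
  have c2 : conj w₂ = w₂ - 2 * (-I * (z₁ * conj z₂) + I * (z₂ * conj z₁)) * I := by
    linear_combination -e2 - 2 * I * h2
  have c3 : conj w₃ = w₃ - 2 * (z₁ * conj z₁) * I := by
    linear_combination -e3 - 2 * I * h3
  have c4 : conj w₄ = w₄ - 2 * (z₂ * conj z₂) * I := by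
    linear_combination -e4 - 2 * I * h4
  have key : bW w₁ w₂ w₃ w₄ - conj (bW w₁ w₂ w₃ w₄)
      = 2 * I * ((aW1 z₁ z₂ w₁ w₂ w₃ w₄ * conj z₂ + aW2 z₁ z₂ w₁ w₂ w₃ w₄ * conj z₁)
        + conj (aW1 z₁ z₂ w₁ w₂ w₃ w₄ * conj z₂ + aW2 z₁ z₂ w₁ w₂ w₃ w₄ * conj z₁)) := by
    simp only [bW, aW1, aW2, map_add, map_sub, map_mul, map_pow, map_neg,
      map_ofNat, Complex.conj_I, Complex.conj_conj, c1, c2, c3, c4]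
    have i2 : (I : ℂ) ^ 2 = -1 := Complex.I_sq
    have i3 : (I : ℂ) ^ 3 = -I := by rw [pow_succ, i2]; ring
    have i4 : (I : ℂ) ^ 4 = 1 := by rw [pow_succ, i3]; simp [Complex.I_mul_I]
    have i5 : (I : ℂ) ^ 5 = I := by rw [pow_succ, i4]; ring
    have i6 : (I : ℂ) ^ 6 = -1 := by rw [pow_succ, i5]; simp [Complex.I_mul_I]
    have i8 : (I : ℂ) ^ 8 = 1 := by rw [pow_succ, pow_succ, i6]; simp [Complex.I_mul_I]
    ring_nf
    simp only [i2, i3, i4, i5, i6, i8]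
    ring
  rw [sb, sa] at key
  have key2 := congrArg Complex.im key
  simp [Complex.mul_im] at key2
  simp [Complex.add_re, Complex.mul_re]
  linarith
end

section
/- For every integer n ≥ 2, consider on ℂ^{2n} with coordinates (z,z') ∈ ℂⁿ × ℂⁿ the n(n−1)/2 + 1 Hermitian forms H_{jk}(z,z') = −i z_j·conj(z_k) + i z_k·conj(z_j) for 1 ≤ j < k ≤ n, together with H'(z,z') = Σ_{j=1}^{n} ( z_j·conj(z'_j) + z'_j·conj(z_j) ). Then these forms (equivalently, their 2n×2n Hermitian matrices) are linearly independent over ℝ, and their matrices have trivial common kernel: any v ∈ ℂ^{2n} annihilated by all of them is 0. Consequently the quadric of codimension n(n−1)/2 + 1 in ℂ^{2n + n(n−1)/2 + 1} defined by these forms is a non-degenerate quadric model. -/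
open Matrix Complex

/-- Matrix of the Hermitian form `H_{jk}(z,z') = -i z_j conj z_k + i z_k conj z_j` on
`ℂ^{2n} = ℂⁿ_z × ℂⁿ_{z'}` (coordinates indexed by `Fin n ⊕ Fin n`). -/
noncomputable def Hjk (n : ℕ) (j k : Fin n) : Matrix (Fin n ⊕ Fin n) (Fin n ⊕ Fin n) ℂ :=
  Matrix.of fun a b =>
    if a = Sum.inl j ∧ b = Sum.inl k then -I
    else if a = Sum.inl k ∧ b = Sum.inl j then I
    else 0

/-- Matrix of the Hermitian form `H'(z,z') = Σ_j (z_j conj z'_j + z'_j conj z_j)`,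
i.e. the block matrix `[[0, Iₙ],[Iₙ, 0]]`. -/
noncomputable def Hprime (n : ℕ) : Matrix (Fin n ⊕ Fin n) (Fin n ⊕ Fin n) ℂ :=
  Matrix.of fun a b =>
    match a, b with
    | Sum.inl j, Sum.inr k => if j = k then 1 else 0
    | Sum.inr j, Sum.inl k => if j = k then 1 else 0
    | _, _ => 0

/-- For every `n ≥ 2`, the `n(n-1)/2 + 1` Hermitian forms `H_{jk}` (`j < k`) and `H'` on
`ℂ^{2n}` are linearly independent over `ℝ` and their matrices have trivial common kernel:
the quadric of codimension `n(n-1)/2 + 1` in `ℂ^{2n + n(n-1)/2 + 1}` they define is a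
non-degenerate quadric model. -/
theorem so_model_nondegenerate (n : ℕ) (hn : 2 ≤ n) :
    (∀ (c : Fin n → Fin n → ℝ) (c' : ℝ),
      (∑ j, ∑ k, if j < k then c j k • Hjk n j k else 0) + c' • Hprime n = 0 →
      (∀ j k : Fin n, j < k → c j k = 0) ∧ c' = 0) ∧
    (∀ v : Fin n ⊕ Fin n → ℂ,
      (∀ j k : Fin n, j < k → Hjk n j k *ᵥ v = 0) → Hprime n *ᵥ v = 0 → v = 0) := by
  constructor
  · intro c c' h
    have key : ∀ j k : Fin n, j < k → c j k = 0 := by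
      intro j k hjk
      have h1 := congrFun (congrFun h (Sum.inl j)) (Sum.inl k)
      simp only [Matrix.add_apply, Matrix.sum_apply, Matrix.smul_apply, Matrix.zero_apply,
        Hjk, Hprime, Matrix.of_apply] at h1
      rw [Finset.sum_eq_single j] at h1
      · rw [Finset.sum_eq_single k] at h1
        · simpa [hjk] using h1
        · intro b _ hb
          split
          · simp [Matrix.smul_apply, Ne.symm hb, hjk.ne']
          · rfl
        · simp
      · intro b _ hb
        refine Finset.sum_eq_zero fun k' _ => ?_
        by_cases hlt : b < k'
        · simp only [if_pos hlt, Matrix.smul_apply, Matrix.of_apply, Sum.inl.injEq]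
          rw [if_neg (by rintro ⟨rfl, -⟩; exact hb rfl), if_neg ?_]
          · simp
          · rintro ⟨rfl, rfl⟩; exact absurd hlt hjk.asymm
        · simp [hlt]
      · simp
    refine ⟨key, ?_⟩
    have j0 : Fin n := ⟨0, by omega⟩
    have h1 := congrFun (congrFun h (Sum.inl j0)) (Sum.inr j0)
    simp only [Matrix.add_apply, Matrix.sum_apply, Matrix.smul_apply, Matrix.zero_apply,
      Hjk, Hprime, Matrix.of_apply] at h1
    rw [Finset.sum_eq_zero, zero_add] at h1
    · simp at h1; exact_mod_cast h1
    · intro x _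
      refine Finset.sum_eq_zero fun y _ => ?_
      split
      · simp
      · rfl
  · intro v _ hv
    funext a
    cases a with
    | inl j =>
      have h1 := congrFun hv (Sum.inr j)
      simpa [Matrix.mulVec, dotProduct, Hprime, Finset.sum_ite_eq] using h1
    | inr j =>
      have h1 := congrFun hv (Sum.inl j)
      simpa [Matrix.mulVec, dotProduct, Hprime, Finset.sum_ite_eq] using h1
end
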